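/- arXiv:1411.5556 — 2 statements merged into one kernel-verified Lean document; each statement's English description precedes it below -/
import Mathlib

section
/- Let c ∈ C¹_T(ℝ) and φ ∈ C¹(ℝ) with φ(t+T) = φ(t)+T, and define [Bv](t) = c(t) v(φ(t)) on C¹_T(ℝ). Suppose q₀ := sup_t |c(t)| < 1 and q₁ := sup_t |c(t) φ′(t)| < 1. Then I − B is bijective from C¹_T(ℝ) to C¹_T(ℝ). -/
/-!
On bounded continuous functions with the sup norm, `v ↦ c · (v ∘ φ)` is a contraction of ratio
`q₀`. This gives uniqueness, and periodicity of the solution, since `v (· + T)` solves the same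
equation. For regularity, differentiate the equation: the pair `(v, β v′)` is a fixed point of the
triangular map `(v, w) ↦ (c · v ∘ φ + g, β c′ · v ∘ φ + c φ′ · w ∘ φ + β g′)`, which for small `β`
is a contraction for the max norm (the weighted norm `‖v‖ + β ‖v′‖` in disguise). Its Picard
iterates started at `(g, β g′)` keep the relation `w = β v′`, and this relation survives uniform
limits.
-/

open Filter Set Function NNReal
open scoped BoundedContinuousFunction

theorem Function.Periodic.deriv {f : ℝ → ℝ} {T : ℝ} (hf : Periodic f T) :
    Periodic (deriv f) T := fun t => by
  rw [← deriv_comp_add_const, show (fun x => f (x + T)) = f from funext hf]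

theorem contDiff_one_of_hasDerivAt {𝕜 F : Type*} [NontriviallyNormedField 𝕜]
    [NormedAddCommGroup F] [NormedSpace 𝕜 F] {f f' : 𝕜 → F} (hf' : Continuous f')
    (hf : ∀ t, HasDerivAt f (f' t) t) : ContDiff 𝕜 1 f := by
  refine contDiff_one_iff_deriv.2 ⟨fun t => (hf t).differentiableAt, ?_⟩
  rwa [show deriv f = f' from funext fun t => (hf t).deriv]

theorem Function.Periodic.exists_boundedContinuousFunction_coe_eq {β : Type*}
    [SeminormedAddCommGroup β] {f : ℝ → β} {T : ℝ} (hf : Periodic f T) (hT : T ≠ 0)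
    (hfc : Continuous f) : ∃ F : ℝ →ᵇ β, ⇑F = f := by
  obtain ⟨C, hC⟩ := (hf.isBounded_of_continuous hT hfc).exists_norm_le
  exact ⟨.ofNormedAddCommGroup f hfc C fun x => hC _ (mem_range_self x), rfl⟩

namespace BoundedContinuousFunction

variable {α : Type*} [TopologicalSpace α]

theorem eq_of_eq_mul_comp_add {a : α →ᵇ ℝ} (ha : ‖a‖ < 1) {ψ : α → α} {h : α → ℝ}
    {u v : α →ᵇ ℝ} (hu : ∀ t, u t = a t * u (ψ t) + h t) (hv : ∀ t, v t = a t * v (ψ t) + h t) :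
    u = v := by
  have hle : ‖u - v‖ ≤ ‖a‖ * ‖u - v‖ := by
    refine (norm_le (by positivity)).2 fun t => ?_
    calc ‖(u - v) t‖ = ‖a t‖ * ‖(u - v) (ψ t)‖ := by
          rw [← norm_mul]; simp only [coe_sub, Pi.sub_apply]; rw [hu t, hv t]; congr 1; ring
      _ ≤ ‖a‖ * ‖u - v‖ := by gcongr <;> exact norm_coe_le_norm _ _
  have : ‖u - v‖ = 0 := by nlinarith [norm_nonneg (u - v)]
  exact sub_eq_zero.1 (norm_eq_zero.1 this)

theorem periodic_of_eq_mul_comp_add {a : ℝ →ᵇ ℝ} (ha : ‖a‖ < 1) {ψ h : ℝ → ℝ} {T : ℝ}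
    (ha_per : Periodic a T) (hh_per : Periodic h T) (hψ : ∀ t, ψ (t + T) = ψ t + T)
    {v : ℝ →ᵇ ℝ} (hv : ∀ t, v t = a t * v (ψ t) + h t) : Periodic v T := by
  set vT := v.compContinuous ⟨(· + T), continuous_add_const T⟩
  have : vT = v := eq_of_eq_mul_comp_add ha
    (fun t => by simp [vT, hv (t + T), ha_per t, hh_per t, hψ]) hv
  exact fun t => DFunLike.congr_fun this t

def triangularComp (a b e h k : α →ᵇ ℝ) (ψ : C(α, α)) (p : (α →ᵇ ℝ) × (α →ᵇ ℝ)) :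
    (α →ᵇ ℝ) × (α →ᵇ ℝ) :=
  (a * p.1.compContinuous ψ + h, b * p.1.compContinuous ψ + e * p.2.compContinuous ψ + k)

theorem dist_triangularComp_le (a b e h k : α →ᵇ ℝ) (ψ : C(α, α))
    (p q : (α →ᵇ ℝ) × (α →ᵇ ℝ)) :
    dist (triangularComp a b e h k ψ p) (triangularComp a b e h k ψ q)
      ≤ max ‖a‖ (‖b‖ + ‖e‖) * dist p q := by
  have hd₁ : ∀ x, dist (p.1 x) (q.1 x) ≤ dist p q := fun x =>
    (dist_coe_le_dist x).trans (le_max_left _ _)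
  have hd₂ : ∀ x, dist (p.2 x) (q.2 x) ≤ dist p q := fun x =>
    (dist_coe_le_dist x).trans (le_max_right _ _)
  rw [Prod.dist_eq]
  refine max_le ((dist_le (by positivity)).2 fun t => ?_) ((dist_le (by positivity)).2 fun t => ?_)
  · calc dist (a t * p.1 (ψ t) + h t) (a t * q.1 (ψ t) + h t)
          = ‖a t‖ * dist (p.1 (ψ t)) (q.1 (ψ t)) := by
            rw [dist_add_right, dist_eq_norm, dist_eq_norm, ← mul_sub, norm_mul]
      _ ≤ max ‖a‖ (‖b‖ + ‖e‖) * dist p q := by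
            gcongr
            exacts [(norm_coe_le_norm a t).trans (le_max_left _ _), hd₁ _]
  · calc dist (b t * p.1 (ψ t) + e t * p.2 (ψ t) + k t)
            (b t * q.1 (ψ t) + e t * q.2 (ψ t) + k t)
          = ‖b t * (p.1 (ψ t) - q.1 (ψ t)) + e t * (p.2 (ψ t) - q.2 (ψ t))‖ := by
            rw [dist_add_right, dist_eq_norm]; congr 1; ring
      _ ≤ ‖b‖ * dist p q + ‖e‖ * dist p q := by
            refine (norm_add_le _ _).trans ?_
            rw [norm_mul, norm_mul, ← dist_eq_norm, ← dist_eq_norm]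
            gcongr <;> first | exact norm_coe_le_norm _ _ | exact hd₁ _ | exact hd₂ _
      _ ≤ max ‖a‖ (‖b‖ + ‖e‖) * dist p q := by
            rw [← add_mul]; gcongr; exact le_max_right _ _

theorem contractingWith_triangularComp {a b e : α →ᵇ ℝ} {K : ℝ≥0} (hK : K < 1) (ha : ‖a‖ ≤ K)
    (hbe : ‖b‖ + ‖e‖ ≤ K) (h k : α →ᵇ ℝ) (ψ : C(α, α)) :
    ContractingWith K (triangularComp a b e h k ψ) :=
  ⟨hK, LipschitzWith.of_dist_le_mul fun p q =>
    (dist_triangularComp_le a b e h k ψ p q).trans (by gcongr; exact max_le ha hbe)⟩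

theorem isClosed_setOf_hasDerivAt {𝕜 G : Type*} [RCLike 𝕜] [NormedAddCommGroup G]
    [NormedSpace 𝕜 G] :
    IsClosed {p : (𝕜 →ᵇ G) × (𝕜 →ᵇ G) | ∀ t, HasDerivAt p.1 (p.2 t) t} := by
  refine isSeqClosed_iff_isClosed.1 fun p q hp hpq => ?_
  have h₁ := tendsto_iff_tendstoUniformly.1 ((continuous_fst.tendsto q).comp hpq)
  have h₂ := tendsto_iff_tendstoUniformly.1 ((continuous_snd.tendsto q).comp hpq)
  exact hasDerivAt_of_tendstoUniformly h₂ (Eventually.of_forall hp) fun t => h₁.tendsto_at t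

theorem exists_hasDerivAt_eq_mul_comp_add (a b e h k : ℝ →ᵇ ℝ) {ψ ψ' : ℝ → ℝ}
    (ha : ∀ t, HasDerivAt a (b t) t) (hh : ∀ t, HasDerivAt h (k t) t)
    (hψ : ∀ t, HasDerivAt ψ (ψ' t) t) (he : ∀ t, e t = a t * ψ' t)
    (ha₁ : ‖a‖ < 1) (he₁ : ‖e‖ < 1) :
    ∃ v w : ℝ →ᵇ ℝ, (∀ t, HasDerivAt v (w t) t) ∧ ∀ t, v t = a t * v (ψ t) + h t := by
  obtain ⟨β, hβ, hβb⟩ : ∃ β : ℝ, 0 < β ∧ ‖β • b‖ + ‖e‖ ≤ (1 + ‖e‖) / 2 := by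
    have hb := norm_nonneg b
    refine ⟨(1 - ‖e‖) / (2 * (‖b‖ + 1)), by positivity, ?_⟩
    rw [norm_smul, Real.norm_of_nonneg (by positivity)]
    have : (1 - ‖e‖) / (2 * (‖b‖ + 1)) * ‖b‖ ≤ (1 - ‖e‖) / 2 := by
      rw [div_mul_eq_mul_div, div_le_div_iff₀ (by positivity) two_pos]
      nlinarith
    linarith
  set K : ℝ≥0 := ⟨max ‖a‖ ((1 + ‖e‖) / 2), by positivity⟩
  have hK : K < 1 := by
    rw [← NNReal.coe_lt_coe]
    exact max_lt ha₁ (by linarith : (1 + ‖e‖) / 2 < 1)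
  let ψc : C(ℝ, ℝ) := ⟨ψ, continuous_iff_continuousAt.2 fun t => (hψ t).continuousAt⟩
  set Φ := triangularComp a (β • b) e h (β • k) ψc
  have hΦ : ContractingWith K Φ :=
    contractingWith_triangularComp hK (le_max_left _ _) (hβb.trans (le_max_right _ _)) _ _ _
  set S := (fun p : (ℝ →ᵇ ℝ) × (ℝ →ᵇ ℝ) => (p.1, β⁻¹ • p.2)) ⁻¹'
    {p | ∀ t, HasDerivAt p.1 (p.2 t) t}
  have hS : IsClosed S := isClosed_setOf_hasDerivAt.preimage (by fun_prop)
  have hΦS : MapsTo Φ S S := by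
    intro p hp t
    refine (((ha t).mul ((hp (ψ t)).comp t (hψ t))).add (hh t)).congr_deriv ?_
    simp only [Φ, triangularComp, coe_add, coe_mul, coe_smul, compContinuous_apply, Pi.add_apply,
      Pi.mul_apply, smul_eq_mul, Function.comp_apply, he, ψc, ContinuousMap.coe_mk]
    field_simp
  have h₀ : (h, β • k) ∈ S := fun t => by simpa [hβ.ne'] using hh t
  have hfix := hS.mem_of_tendsto (hΦ.tendsto_iterate_fixedPoint (h, β • k))
    (Eventually.of_forall fun n => hΦS.iterate n h₀)
  exact ⟨_, _, hfix, fun t => congrArg (fun p => p.1 t) hΦ.fixedPoint_isFixedPt.symm⟩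

end BoundedContinuousFunction

open BoundedContinuousFunction

/-- If q₀ = sup|c| < 1 and q₁ = sup|c·φ′| < 1, then I − B with
[Bv](t) = c(t) v(φ(t)) is bijective on C¹_T(ℝ): for every C¹ T-periodic g
there is a unique C¹ T-periodic v with v = Bv + g. -/
theorem stmt_6 (T : ℝ) (hT : 0 < T) (c φ : ℝ → ℝ) (q₀ q₁ : ℝ)
    (hc : ContDiff ℝ 1 c) (hc_per : Function.Periodic c T)
    (hφ : ContDiff ℝ 1 φ) (hφT : ∀ t, φ (t + T) = φ t + T)
    (hq₀ : ∀ t, |c t| ≤ q₀) (hq₀1 : q₀ < 1)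
    (hq₁ : ∀ t, |c t * deriv φ t| ≤ q₁) (hq₁1 : q₁ < 1) :
    ∀ g : ℝ → ℝ, ContDiff ℝ 1 g → Function.Periodic g T →
      ∃! v : ℝ → ℝ, ContDiff ℝ 1 v ∧ Function.Periodic v T ∧
        ∀ t, v t = c t * v (φ t) + g t := by
  intro g hg hg_per
  have hasDerivAt_deriv {f : ℝ → ℝ} (hf : ContDiff ℝ 1 f) (t : ℝ) : HasDerivAt f (deriv f t) t :=
    (hf.differentiable one_ne_zero t).hasDerivAt
  obtain ⟨c', hc'⟩ :=
    hc_per.deriv.exists_boundedContinuousFunction_coe_eq hT.ne' (hc.continuous_deriv le_rfl)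
  obtain ⟨g', hg'⟩ :=
    hg_per.deriv.exists_boundedContinuousFunction_coe_eq hT.ne' (hg.continuous_deriv le_rfl)
  obtain ⟨e, he⟩ : ∃ e : ℝ →ᵇ ℝ, ⇑e = fun t => c t * deriv φ t :=
    ⟨.ofNormedAddCommGroup _ (hc.continuous.mul (hφ.continuous_deriv le_rfl)) q₁ hq₁, rfl⟩
  obtain ⟨c, rfl⟩ := hc_per.exists_boundedContinuousFunction_coe_eq hT.ne' hc.continuous
  obtain ⟨g, rfl⟩ := hg_per.exists_boundedContinuousFunction_coe_eq hT.ne' hg.continuous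
  have hc₁ : ‖c‖ < 1 := ((norm_le ((abs_nonneg _).trans (hq₀ 0))).2 hq₀).trans_lt hq₀1
  have he₁ : ‖e‖ < 1 := by
    refine ((norm_le ((abs_nonneg _).trans (hq₁ 0))).2 fun t => ?_).trans_lt hq₁1
    simpa [he] using hq₁ t
  obtain ⟨v, w, hvw, hv⟩ := exists_hasDerivAt_eq_mul_comp_add c c' e g g'
    (hc' ▸ hasDerivAt_deriv hc) (hg' ▸ hasDerivAt_deriv hg) (hasDerivAt_deriv hφ)
    (fun t => congrFun he t) hc₁ he₁
  refine ⟨v, ⟨contDiff_one_of_hasDerivAt w.continuous hvw,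
    periodic_of_eq_mul_comp_add hc₁ hc_per hg_per hφT hv, hv⟩, ?_⟩
  rintro u ⟨hu, hu_per, hu_eq⟩
  obtain ⟨u, rfl⟩ := hu_per.exists_boundedContinuousFunction_coe_eq hT.ne' hu.continuous
  rw [eq_of_eq_mul_comp_add hc₁ hu_eq hv]
end

section
/- Let c₁, c₂ : ℝ → ℝ be continuous T-periodic functions and φ₁, φ₂ : ℝ → ℝ continuous with φ_i(t+T) = φ_i(t)+T. If c₁(t) c₂(φ₁(t)) > 1 for all t, then the operator [B′v](t) = c₁(t) c₂(φ₁(t)) v(φ₂(φ₁(t))) satisfies: I − B′ is bijective on C_T(ℝ), provided φ₂ ∘ φ₁ is a homeomorphism of ℝ; indeed the equation v = B′v + g can be rewritten as v(σ) = [c₁ c₂∘φ₁]^{-1}((φ₂∘φ₁)^{-1}(σ)) (v − g̃)((φ₂∘φ₁)^{-1}(σ)), which is a contraction on C_T(ℝ) since the coefficient has sup norm < 1. -/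
/-!
Since the multiplier `a = c₁ · (c₂ ∘ φ₁)` exceeds `1`, the equation `v = a · (v ∘ Φ) + g` with
`Φ = φ₂ ∘ φ₁` is solved for the other occurrence of `v`: substituting `t = Ψ σ` gives
`v σ = (a (Ψ σ))⁻¹ · v (Ψ σ) - (a (Ψ σ))⁻¹ · g (Ψ σ)`, whose weight has sup norm `< 1` by
compactness of a period. This is a contraction on the bounded continuous functions on `ℝ`; its
fixed point is periodic because its translate by `T` is again a fixed point.
-/

open Function

theorem forall_eq_mul_comp_add_iff {α K : Type*} [DivisionRing K] {a g v : α → K} {Φ Ψ : α → α}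
    (hΨΦ : LeftInverse Ψ Φ) (hΦΨ : RightInverse Ψ Φ) (ha : ∀ t, a t ≠ 0) :
    (∀ t, v t = a t * v (Φ t) + g t) ↔
      ∀ σ, v σ = (a (Ψ σ))⁻¹ * v (Ψ σ) + -((a (Ψ σ))⁻¹ * g (Ψ σ)) := by
  rw [hΨΦ.surjective.forall]
  refine forall_congr' fun σ => ?_
  rw [hΦΨ σ, ← mul_neg, ← mul_add, ← sub_eq_add_neg, eq_inv_mul_iff_mul_eq₀ (ha _),
    eq_sub_iff_add_eq, eq_comm]

theorem Function.Periodic.comp_semiconj {α : Type*} {f : ℝ → α} {ψ : ℝ → ℝ} {T : ℝ}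
    (hf : Periodic f T) (hψ : Semiconj ψ (· + T) (· + T)) : Periodic (f ∘ ψ) T := fun t => by
  simp only [comp_apply, hψ.eq t, hf (ψ t)]

theorem Function.Periodic.exists_lt_forall_le {f : ℝ → ℝ} {T c : ℝ} (hf : Periodic f T)
    (hT : T ≠ 0) (hfc : Continuous f) (hc : ∀ t, f t < c) : ∃ k < c, ∀ t, f t ≤ k := by
  obtain ⟨_, ⟨t₀, rfl⟩, hmax⟩ :=
    (hf.compact_of_continuous hT hfc).exists_isGreatest (Set.range_nonempty f)
  exact ⟨f t₀, hc t₀, fun t => hmax ⟨t, rfl⟩⟩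

namespace BoundedContinuousFunction

def ofPeriodic {α : Type*} [PseudoMetricSpace α] {f : ℝ → α} {T : ℝ} (hT : T ≠ 0)
    (hf : Continuous f) (hfT : Periodic f T) : ℝ →ᵇ α :=
  ⟨⟨f, hf⟩, Metric.isBounded_range_iff.1 (hfT.isBounded_of_continuous hT hf)⟩

@[simp]
theorem coe_ofPeriodic {α : Type*} [PseudoMetricSpace α] {f : ℝ → α} {T : ℝ} (hT : T ≠ 0)
    (hf : Continuous f) (hfT : Periodic f T) : ⇑(ofPeriodic hT hf hfT) = f :=
  rfl

theorem contractingWith_mul_compContinuous_add {α R : Type*} [TopologicalSpace α]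
    [NonUnitalNormedRing R] (β : α →ᵇ R) (ψ : C(α, α)) (η : α →ᵇ R) (hβ : ‖β‖ < 1) :
    ContractingWith ‖β‖₊ fun v : α →ᵇ R => β * v.compContinuous ψ + η := by
  refine ⟨hβ, LipschitzWith.of_dist_le_mul fun v w => ?_⟩
  calc dist (β * v.compContinuous ψ + η) (β * w.compContinuous ψ + η)
      = ‖β * (v - w).compContinuous ψ‖ := by
        rw [dist_add_right, dist_eq_norm, ← mul_sub]; rfl
    _ ≤ ‖β‖ * ‖(v - w).compContinuous ψ‖ := norm_mul_le _ _
    _ ≤ ‖β‖ * dist v w := by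
        rw [dist_eq_norm]; gcongr; exact norm_compContinuous_le _ _

end BoundedContinuousFunction

open BoundedContinuousFunction in
theorem Function.Periodic.existsUnique_eq_mul_comp_add {T : ℝ} (hT : T ≠ 0) {β η ψ : ℝ → ℝ}
    (hβ : Continuous β) (hβT : Periodic β T) (hβ_lt : ∀ t, |β t| < 1)
    (hη : Continuous η) (hηT : Periodic η T)
    (hψ : Continuous ψ) (hψT : Semiconj ψ (· + T) (· + T)) :
    ∃! v : ℝ → ℝ, Continuous v ∧ Periodic v T ∧ ∀ t, v t = β t * v (ψ t) + η t := by
  obtain ⟨k, hk1, hk⟩ := (hβT.comp abs).exists_lt_forall_le hT hβ.abs hβ_lt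
  set B := ofPeriodic hT hβ hβT
  have hB : ‖B‖ < 1 :=
    ((norm_le ((abs_nonneg _).trans (hk 0))).2 hk).trans_lt hk1
  set F := fun v : ℝ →ᵇ ℝ => B * v.compContinuous ⟨ψ, hψ⟩ + ofPeriodic hT hη hηT
  have hF : ContractingWith ‖B‖₊ F := contractingWith_mul_compContinuous_add _ _ _ hB
  have isFixedPt_iff : ∀ v : ℝ →ᵇ ℝ, IsFixedPt F v ↔ ∀ t, v t = β t * v (ψ t) + η t :=
    fun v => by simp [F, B, IsFixedPt, BoundedContinuousFunction.ext_iff, eq_comm]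
  set v₀ := ContractingWith.fixedPoint F hF
  have hv₀ := (isFixedPt_iff v₀).1 hF.fixedPoint_isFixedPt
  have shift_isFixedPt : IsFixedPt F (v₀.compContinuous (ContinuousMap.addRight T)) := by
    refine (isFixedPt_iff _).2 fun t => ?_
    simpa [hβT t, hηT t, hψT.eq t] using hv₀ (t + T)
  refine ⟨v₀, ⟨v₀.continuous, DFunLike.congr_fun (hF.fixedPoint_unique shift_isFixedPt), hv₀⟩, ?_⟩
  rintro w ⟨hw, hwT, hw_eq⟩
  exact congrArg (⇑) (hF.fixedPoint_unique ((isFixedPt_iff (ofPeriodic hT hw hwT)).2 hw_eq))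

theorem stmt_18_general (T : ℝ) (hT : 0 < T) (c₁ c₂ φ₁ φ₂ : ℝ → ℝ)
    (hc₁ : Continuous c₁) (hc₁_per : Function.Periodic c₁ T)
    (hc₂ : Continuous c₂) (hc₂_per : Function.Periodic c₂ T)
    (hφ₁ : Continuous φ₁) (hφ₁T : ∀ t, φ₁ (t + T) = φ₁ t + T)
    (hφ₂T : ∀ t, φ₂ (t + T) = φ₂ t + T)
    (hexp : ∀ t, 1 < c₁ t * c₂ (φ₁ t))
    (Ψ : ℝ → ℝ) (hΨ : Continuous Ψ)
    (hΨ₁ : ∀ t, Ψ (φ₂ (φ₁ t)) = t) (hΨ₂ : ∀ σ, φ₂ (φ₁ (Ψ σ)) = σ) :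
    ∀ g : ℝ → ℝ, Continuous g → Function.Periodic g T →
      ∃! v : ℝ → ℝ, Continuous v ∧ Function.Periodic v T ∧
        ∀ t, v t = c₁ t * c₂ (φ₁ t) * v (φ₂ (φ₁ t)) + g t := by
  intro g hg hgT
  set a : ℝ → ℝ := fun t => c₁ t * c₂ (φ₁ t)
  have ha : Continuous (a ∘ Ψ) := (hc₁.mul (hc₂.comp hφ₁)).comp hΨ
  have ha1 : ∀ t, 1 < a t := hexp
  have ha0 : ∀ t, a t ≠ 0 := fun t => (one_pos.trans (ha1 t)).ne'
  have hΨT : Semiconj Ψ (· + T) (· + T) :=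
    ((show Semiconj φ₂ (· + T) (· + T) from hφ₂T).comp_left hφ₁T).inverse_left hΨ₁ hΨ₂
  have haT : Periodic (a ∘ Ψ) T :=
    (hc₁_per.mul (hc₂_per.comp_semiconj hφ₁T)).comp_semiconj hΨT
  have hb : Continuous fun σ => (a (Ψ σ))⁻¹ := ha.inv₀ fun σ => ha0 (Ψ σ)
  refine (existsUnique_congr fun v => and_congr_right' <| and_congr_right' <|
      forall_eq_mul_comp_add_iff (Φ := φ₂ ∘ φ₁) hΨ₁ hΨ₂ ha0).2 <|
    Periodic.existsUnique_eq_mul_comp_add hT.ne' hb (haT.comp (·⁻¹)) (fun σ => ?_)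
      (hb.mul (hg.comp hΨ)).neg (((haT.comp (·⁻¹)).mul (hgT.comp_semiconj hΨT)).comp (-·)) hΨ hΨT
  rw [abs_inv, abs_of_pos (one_pos.trans (ha1 _))]
  exact inv_lt_one_of_one_lt₀ (ha1 _)

/-- The 'expanding' case of bijectivity of I − B′: if c₁(t)c₂(φ₁(t)) > 1 for
all t and φ₂ ∘ φ₁ is a homeomorphism of ℝ, then for every continuous
T-periodic g the equation v = B′v + g, [B′v](t) = c₁(t)c₂(φ₁(t))v(φ₂(φ₁(t))),
has a unique continuous T-periodic solution. -/
theorem stmt_18 (T : ℝ) (hT : 0 < T) (c₁ c₂ φ₁ φ₂ : ℝ → ℝ)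
    (hc₁ : Continuous c₁) (hc₁_per : Function.Periodic c₁ T)
    (hc₂ : Continuous c₂) (hc₂_per : Function.Periodic c₂ T)
    (hφ₁ : Continuous φ₁) (hφ₁T : ∀ t, φ₁ (t + T) = φ₁ t + T)
    (hφ₂ : Continuous φ₂) (hφ₂T : ∀ t, φ₂ (t + T) = φ₂ t + T)
    (hexp : ∀ t, 1 < c₁ t * c₂ (φ₁ t))
    (Ψ : ℝ → ℝ) (hΨ : Continuous Ψ)
    (hΨ₁ : ∀ t, Ψ (φ₂ (φ₁ t)) = t) (hΨ₂ : ∀ σ, φ₂ (φ₁ (Ψ σ)) = σ) :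
    ∀ g : ℝ → ℝ, Continuous g → Function.Periodic g T →
      ∃! v : ℝ → ℝ, Continuous v ∧ Function.Periodic v T ∧
        ∀ t, v t = c₁ t * c₂ (φ₁ t) * v (φ₂ (φ₁ t)) + g t :=
  stmt_18_general T hT c₁ c₂ φ₁ φ₂ hc₁ hc₁_per hc₂ hc₂_per hφ₁ hφ₁T hφ₂T hexp Ψ hΨ hΨ₁ hΨ₂
end
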